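/- The function \varphi(x) = 1/x^2 - e^{-x}/(1 - e^{-x})^2 is strictly decreasing on the interval (0, 1). -/

import Mathlib

/-!
With `y = exp x` one has `φ' x = -2 / x ^ 3 + y (y + 1) / (y - 1) ^ 3`, so it suffices that
`x ^ 3 y (y + 1) < 2 (y - 1) ^ 3`. The two sides agree to order `x ^ 6`; on `(0, 1]` the
inequality follows by bounding `y - 1` below by its Taylor polynomial of degree six and `y` above
by that of degree six plus a remainder `x ^ 7 / 4410`, after which the
difference is `x ^ 7` times a polynomial with positive coefficients.
-/

open Real Set

lemma mul_taylor_le_exp_sub_one {x : ℝ} (hx : 0 ≤ x) :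
    x * (1 + x / 2 + x ^ 2 / 6 + x ^ 3 / 24 + x ^ 4 / 120 + x ^ 5 / 720) ≤ exp x - 1 := by
  have h := sum_le_exp_of_nonneg hx 7
  simp only [Finset.sum_range_succ, Finset.sum_range_zero, Nat.factorial] at h
  norm_num at h
  linarith

lemma exp_le_taylor_add_remainder {x : ℝ} (hx0 : 0 ≤ x) (hx1 : x ≤ 1) :
    exp x ≤ 1 + x + x ^ 2 / 2 + x ^ 3 / 6 + x ^ 4 / 24 + x ^ 5 / 120 + x ^ 6 / 720
      + x ^ 7 / 4410 := by
  have h := exp_bound' hx0 hx1 (n := 7) (by norm_num)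
  simp only [Finset.sum_range_succ, Finset.sum_range_zero, Nat.factorial] at h
  norm_num at h
  linarith

lemma exp_mul_exp_add_one_div_lt {x : ℝ} (hx0 : 0 < x) (hx1 : x ≤ 1) :
    exp x * (exp x + 1) / (exp x - 1) ^ 3 < 2 / x ^ 3 := by
  set q := 1 + x / 2 + x ^ 2 / 6 + x ^ 3 / 24 + x ^ 4 / 120 + x ^ 5 / 720
  set u := 1 + x + x ^ 2 / 2 + x ^ 3 / 6 + x ^ 4 / 24 + x ^ 5 / 120 + x ^ 6 / 720 + x ^ 7 / 4410
  have hq : x * q ≤ exp x - 1 := mul_taylor_le_exp_sub_one hx0.le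
  have hu : exp x ≤ u := exp_le_taylor_add_remainder hx0.le hx1
  have hpoly : u * (u + 1) < 2 * q ^ 3 := by
    have hdiff : 2 * q ^ 3 - u * (u + 1) = x ^ 4 * (1 / 120 + x / 80 + 37 * x ^ 2 / 4320
        + 541 * x ^ 3 / 141120 + 53 * x ^ 4 / 39200 + 43 * x ^ 5 / 112896
        + 781 * x ^ 6 / 8467200 + 317 * x ^ 7 / 16934400 + 67 * x ^ 8 / 21168000
        + 73 * x ^ 9 / 169344000 + 1121 * x ^ 10 / 24893568000 + x ^ 11 / 186624000) := by
      simp only [q, u]; ring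
    rw [← sub_pos, hdiff]
    positivity
  have hxq : 0 < x * q := by positivity
  rw [div_lt_div_iff₀ (pow_pos (hxq.trans_le hq) 3) (by positivity)]
  calc exp x * (exp x + 1) * x ^ 3
      ≤ u * (u + 1) * x ^ 3 := by gcongr
    _ < 2 * q ^ 3 * x ^ 3 := by gcongr
    _ = 2 * (x * q) ^ 3 := by ring
    _ ≤ 2 * (exp x - 1) ^ 3 := by gcongr

lemma exp_neg_div_one_sub_exp_neg_sq (x : ℝ) :
    exp (-x) / (1 - exp (-x)) ^ 2 = exp x / (exp x - 1) ^ 2 := by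
  have hx := (exp_pos x).ne'
  rw [exp_neg, ← one_div, one_sub_div hx, div_pow, div_div_eq_mul_div]
  field_simp

lemma hasDerivAt_one_div_sq_sub_exp_div_exp_sub_one_sq {x : ℝ} (hx : x ≠ 0) :
    HasDerivAt (fun x => 1 / x ^ 2 - exp x / (exp x - 1) ^ 2)
      (-2 / x ^ 3 + exp x * (exp x + 1) / (exp x - 1) ^ 3) x := by
  have hden : exp x - 1 ≠ 0 := sub_ne_zero.mpr (exp_eq_one_iff x |>.not.mpr hx)
  have h := ((hasDerivAt_const x (1 : ℝ)).div (hasDerivAt_pow 2 x) (pow_ne_zero 2 hx)).sub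
    ((hasDerivAt_exp x).div (((hasDerivAt_exp x).sub_const 1).fun_pow 2) (pow_ne_zero 2 hden))
  refine h.congr_deriv ?_
  field_simp
  ring

theorem stmt12 :
    StrictAntiOn (fun x : ℝ => 1 / x ^ 2 - Real.exp (-x) / (1 - Real.exp (-x)) ^ 2)
      (Set.Ioo (0 : ℝ) 1) := by
  simp_rw [exp_neg_div_one_sub_exp_neg_sq]
  have hderiv (x : ℝ) (hx : x ∈ Ioo 0 1) :=
    hasDerivAt_one_div_sq_sub_exp_div_exp_sub_one_sq hx.1.ne'
  refine strictAntiOn_of_hasDerivWithinAt_neg (convex_Ioo 0 1)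
    (f' := fun x => -2 / x ^ 3 + exp x * (exp x + 1) / (exp x - 1) ^ 3)
    (fun x hx => (hderiv x hx).continuousAt.continuousWithinAt) ?_ ?_ <;> rw [interior_Ioo]
  · exact fun x hx => (hderiv x hx).hasDerivWithinAt
  · intro x hx
    have := exp_mul_exp_add_one_div_lt hx.1 hx.2.le
    linarith [neg_div (x ^ 3) 2]
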